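/- (Corollary, midpoint error for cubics) Let u(x) = a x³ + b x² + c x + d with a, b, c, d ∈ ℝ, and let x̃_i = (x_{i−1} + x_{i+1})/2 for 1 ≤ i ≤ n−1, x̃_0 = (x_0 + x_1)/2, x̃_n = (x_{n−1} + x_n)/2. Then for every interior index 1 ≤ i ≤ n−1, |g_i − u'(x̃_i)| = (|a|/4) (x_{i+1} − x_{i−1})²; moreover |g_0 − u'(x̃_0)| = (|a|/4) (x_1 − x_0)² and |g_n − u'(x̃_n)| = (|a|/4) (x_n − x_{n−1})². -/

import Mathlib

open intervalIntegral

/-- The standard hat (piecewise linear nodal) basis function `φ_i` associated with the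
partition `x 0 < x 1 < ... < x n`.  The branch on `[x_{i-1}, x_i]` is omitted when `i = 0`
and the branch on `[x_i, x_{i+1}]` is omitted when `i = n`. -/
noncomputable def hatFn (x : ℕ → ℝ) (n i : ℕ) : ℝ → ℝ := fun t =>
  if 0 < i ∧ x (i-1) ≤ t ∧ t ≤ x i then (t - x (i-1)) / (x i - x (i-1))
  else if i < n ∧ x i ≤ t ∧ t ≤ x (i+1) then (x (i+1) - t) / (x (i+1) - x i)
  else 0

/-- The biorthogonal basis function `λ_i`. -/
noncomputable def biorthFn (x : ℕ → ℝ) (n i : ℕ) : ℝ → ℝ := fun t =>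
  if 0 < i ∧ x (i-1) ≤ t ∧ t < x i then (2*(t - x (i-1)) + (t - x i)) / (x i - x (i-1))
  else if i < n ∧ x i ≤ t ∧ t < x (i+1) then (2*(t - x (i+1)) + (t - x i)) / (x i - x (i+1))
  else 0

/-- The piecewise derivative `u_h'` of the interpolant `u_h = Σ_j u(x_j) φ_j`:
on each open subinterval `(x_j, x_{j+1})` it is the constant
`(u(x_{j+1}) - u(x_j)) / (x_{j+1} - x_j)`, and it is (arbitrarily) `0` at grid points and
outside `[x 0, x n]`. -/
noncomputable def interpDeriv (x : ℕ → ℝ) (n : ℕ) (u : ℝ → ℝ) : ℝ → ℝ := fun t =>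
  ∑ j ∈ Finset.range n,
    if x j < t ∧ t < x (j+1) then (u (x (j+1)) - u (x j)) / (x (j+1) - x j) else 0

/-- The recovered gradient value
`g_i = (∫_α^β u_h' λ_i dx) / (∫_α^β φ_i λ_i dx)` with `α = x 0`, `β = x n`. -/
noncomputable def recGrad (x : ℕ → ℝ) (n : ℕ) (u : ℝ → ℝ) (i : ℕ) : ℝ :=
  (∫ t in (x 0)..(x n), interpDeriv x n u t * biorthFn x n i t) /
  (∫ t in (x 0)..(x n), hatFn x n i t * biorthFn x n i t)

/-!
On each element `[x j, x (j + 1)]` the functions `φ_i` and `λ_i` are affine, so every integrand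
is a quadratic there. On each of the two elements of the support of `φ_i`, `λ_i` integrates to half
the element length both against `1` and against `φ_i` (on the reference element,
`∫₀¹ (3s - 1) = ∫₀¹ s (3s - 1) = 1/2`), while `u_h'` is the slope of `u` on the element. Hence the
numerator and denominator of `g_i` are halves of telescoping sums of `u (x j)` and of `x j`, and
`g_i` is the slope of `u` across the support of `φ_i`. For a cubic, the slope across `[A, C]`
exceeds `u'` at the midpoint by exactly `a (C - A)² / 4`.
-/

open Finset
open Set (EqOn Ioo)

theorem integral_quadratic (p q r A B : ℝ) :
    ∫ t in A..B, (p * t ^ 2 + q * t + r) =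
      p * (B ^ 3 - A ^ 3) / 3 + q * (B ^ 2 - A ^ 2) / 2 + r * (B - A) := by
  rw [integral_add, integral_add, integral_const_mul, integral_const_mul, integral_pow,
    integral_id, integral_const]
  · simp only [smul_eq_mul]; ring
  all_goals exact (by fun_prop : Continuous _).intervalIntegrable _ _

theorem integral_eq_sum_integral_of_eqOn_Ioo {x : ℕ → ℝ} {n : ℕ} {f : ℝ → ℝ} {g : ℕ → ℝ → ℝ}
    (hx : ∀ j < n, x j ≤ x (j + 1)) (hg : ∀ j < n, Continuous (g j))
    (hfg : ∀ j < n, EqOn f (g j) (Ioo (x j) (x (j + 1)))) :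
    ∫ t in x 0..x n, f t = ∑ j ∈ range n, ∫ t in x j..x (j + 1), g j t := by
  rw [← sum_integral_adjacent_intervals]
  · refine sum_congr rfl fun j hj => ?_
    exact integral_congr_Ioo_of_le (hx j (mem_range.1 hj)) (hfg j (mem_range.1 hj))
  · intro j hj
    refine (intervalIntegrable_congr_uIoo ?_).2 ((hg j hj).intervalIntegrable _ _)
    rw [Set.uIoo_of_le (hx j hj)]
    exact hfg j hj

theorem sum_range_ite_sub {M : Type*} [AddCommGroup M] (v : ℕ → M) {n i : ℕ} (hi : i ≤ n) :
    ∑ j ∈ range n, (if j + 1 = i ∨ j = i then v (j + 1) - v j else 0) =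
      v (min (i + 1) n) - v (i - 1) := by
  have hsupp : (range n).filter (fun j => j + 1 = i ∨ j = i) = Ico (i - 1) (min (i + 1) n) := by
    ext j; simp only [mem_filter, mem_range, mem_Ico]; omega
  rw [← sum_filter, hsupp, sum_Ico_sub _ (by omega)]

theorem slope_cubic_sub_deriv_midpoint (a b c d : ℝ) {A C : ℝ} (h : A ≠ C) :
    slope (fun t => a * t ^ 3 + b * t ^ 2 + c * t + d) A C
        - (3 * a * ((A + C) / 2) ^ 2 + 2 * b * ((A + C) / 2) + c) = a / 4 * (C - A) ^ 2 := by
  rw [slope_def_field]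
  field_simp [sub_ne_zero.2 h.symm]
  ring

noncomputable def hatShape (A B t : ℝ) : ℝ := (t - A) / (B - A)

noncomputable def biorthShape (A B t : ℝ) : ℝ := (2 * (t - A) + (t - B)) / (B - A)

/-- The nodal function at `x i` on the element `(x j, x (j + 1))`, when its form on an element
joining the node `B = x i` to a neighbouring node `A` is `shape A B`. -/
def nodalPiece (x : ℕ → ℝ) (shape : ℝ → ℝ → ℝ → ℝ) (i j : ℕ) (t : ℝ) : ℝ :=
  if j + 1 = i then shape (x j) (x (j + 1)) t
  else if j = i then shape (x (j + 1)) (x j) t else 0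

theorem integral_biorthShape (A B : ℝ) : ∫ t in A..B, biorthShape A B t = (B - A) / 2 := by
  rcases eq_or_ne A B with rfl | hAB
  · simp
  have hBA : B - A ≠ 0 := sub_ne_zero.2 hAB.symm
  have hpoly :
      biorthShape A B = fun t => 0 * t ^ 2 + 3 / (B - A) * t + -(2 * A + B) / (B - A) := by
    ext t; simp only [biorthShape]; field_simp; ring
  rw [hpoly, integral_quadratic]
  field_simp
  ring

theorem integral_hatShape_mul_biorthShape (A B : ℝ) :
    ∫ t in A..B, hatShape A B t * biorthShape A B t = (B - A) / 2 := by
  rcases eq_or_ne A B with rfl | hAB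
  · simp
  have hBA : B - A ≠ 0 := sub_ne_zero.2 hAB.symm
  have hpoly : (fun t => hatShape A B t * biorthShape A B t) = fun t =>
      3 / (B - A) ^ 2 * t ^ 2 + -(5 * A + B) / (B - A) ^ 2 * t + A * (2 * A + B) / (B - A) ^ 2 := by
    ext t; simp only [hatShape, biorthShape]; field_simp; ring
  rw [hpoly, integral_quadratic]
  field_simp
  ring

section grid

variable {x : ℕ → ℝ} {n i j : ℕ}

theorem continuous_nodalPiece {shape : ℝ → ℝ → ℝ → ℝ} (h : ∀ A B, Continuous (shape A B)) :
    Continuous (nodalPiece x shape i j) :=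
  continuous_if_const _ (fun _ => h _ _) fun _ =>
    continuous_if_const _ (fun _ => h _ _) fun _ => continuous_const

theorem nodalPiece_mul (f g : ℝ → ℝ → ℝ → ℝ) (t : ℝ) :
    nodalPiece x f i j t * nodalPiece x g i j t =
      nodalPiece x (fun A B t => f A B t * g A B t) i j t := by
  unfold nodalPiece
  split_ifs <;> simp

theorem integral_nodalPiece {shape : ℝ → ℝ → ℝ → ℝ}
    (h : ∀ A B, ∫ t in A..B, shape A B t = (B - A) / 2) :
    ∫ t in x j..x (j + 1), nodalPiece x shape i j t =
      (if j + 1 = i ∨ j = i then x (j + 1) - x j else 0) / 2 := by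
  by_cases h₁ : j + 1 = i
  · simp only [nodalPiece, if_pos h₁, if_pos (Or.inl h₁), h]
  by_cases h₂ : j = i
  · simp only [nodalPiece, if_neg h₁, if_pos h₂, if_pos (Or.inr h₂)]
    rw [integral_symm, h]
    ring
  · simp [nodalPiece, h₁, h₂]

theorem le_of_strictMonoOn_Iic (hx : StrictMonoOn x (Set.Iic n)) {p q : ℕ} (hpq : p ≤ q)
    (hq : q ≤ n) : x p ≤ x q :=
  hx.monotoneOn (Set.mem_Iic.2 (hpq.trans hq)) (Set.mem_Iic.2 hq) hpq

theorem lt_succ_of_strictMonoOn_Iic (hx : StrictMonoOn x (Set.Iic n)) (hj : j < n) :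
    x j < x (j + 1) :=
  hx (Set.mem_Iic.2 hj.le) (Set.mem_Iic.2 hj) j.lt_add_one

theorem interpDeriv_eqOn (hx : StrictMonoOn x (Set.Iic n)) (u : ℝ → ℝ) (hj : j < n) :
    EqOn (interpDeriv x n u) (fun _ => slope u (x j) (x (j + 1))) (Ioo (x j) (x (j + 1))) := by
  intro t ⟨hjt, htj⟩
  rw [interpDeriv, sum_eq_single_of_mem j (mem_range.2 hj), if_pos ⟨hjt, htj⟩, slope_def_field]
  intro k hk hkj
  rw [mem_range] at hk
  rcases hkj.lt_or_gt with hkj | hjk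
  · exact if_neg fun h => (h.2.trans_le (le_of_strictMonoOn_Iic hx hkj hj.le)).not_gt hjt
  · exact if_neg fun h => (htj.trans_le (le_of_strictMonoOn_Iic hx hjk hk.le)).not_gt h.1

theorem hatFn_eqOn_nodalPiece (hx : StrictMonoOn x (Set.Iic n)) (hi : i ≤ n) (hj : j < n) :
    EqOn (hatFn x n i) (nodalPiece x hatShape i j) (Ioo (x j) (x (j + 1))) := by
  intro t ⟨hjt, htj⟩
  rcases (by omega : j + 1 = i ∨ j = i ∨ j + 1 < i ∨ i < j) with rfl | rfl | hji | hij
  · simp [hatFn, nodalPiece, hatShape, hjt.le, htj.le]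
  · simp only [hatFn, nodalPiece, hatShape, hjt.not_ge, hj, hjt.le, htj.le, and_false, and_self,
      ↓reduceIte, Nat.add_eq_left, one_ne_zero]
    rw [← neg_div_neg_eq, neg_sub, neg_sub]
  · have h₁ : t < x (i - 1) := htj.trans_le (le_of_strictMonoOn_Iic hx (by omega) (by omega))
    have h₂ : t < x i := htj.trans_le (le_of_strictMonoOn_Iic hx (by omega) hi)
    simp [hatFn, nodalPiece, not_le.2 h₁, not_le.2 h₂, show j + 1 ≠ i by omega, show j ≠ i by omega]
  · have h₁ : x i < t := (le_of_strictMonoOn_Iic hx hij.le hj.le).trans_lt hjt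
    have h₂ : x (i + 1) < t := (le_of_strictMonoOn_Iic hx hij hj.le).trans_lt hjt
    simp [hatFn, nodalPiece, not_le.2 h₁, not_le.2 h₂, show j + 1 ≠ i by omega, show j ≠ i by omega]

theorem biorthFn_eqOn_nodalPiece (hx : StrictMonoOn x (Set.Iic n)) (hi : i ≤ n) (hj : j < n) :
    EqOn (biorthFn x n i) (nodalPiece x biorthShape i j) (Ioo (x j) (x (j + 1))) := by
  intro t ⟨hjt, htj⟩
  rcases (by omega : j + 1 = i ∨ j = i ∨ j + 1 < i ∨ i < j) with rfl | rfl | hji | hij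
  · simp [biorthFn, nodalPiece, biorthShape, hjt.le, htj]
  · simp [biorthFn, nodalPiece, biorthShape, hj, hjt.le, htj, hjt.not_gt]
  · have h₁ : t < x (i - 1) := htj.trans_le (le_of_strictMonoOn_Iic hx (by omega) (by omega))
    have h₂ : t < x i := htj.trans_le (le_of_strictMonoOn_Iic hx (by omega) hi)
    simp [biorthFn, nodalPiece, not_le.2 h₁, not_le.2 h₂, show j + 1 ≠ i by omega,
      show j ≠ i by omega]
  · have h₁ : x i < t := (le_of_strictMonoOn_Iic hx hij.le hj.le).trans_lt hjt
    have h₂ : x (i + 1) < t := (le_of_strictMonoOn_Iic hx hij hj.le).trans_lt hjt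
    simp [biorthFn, nodalPiece, not_lt.2 h₁.le, not_lt.2 h₂.le, show j + 1 ≠ i by omega,
      show j ≠ i by omega]

theorem integral_interpDeriv_mul_biorthFn (hx : StrictMonoOn x (Set.Iic n)) (hi : i ≤ n)
    (u : ℝ → ℝ) :
    ∫ t in x 0..x n, interpDeriv x n u t * biorthFn x n i t =
      ∑ j ∈ range n,
        slope u (x j) (x (j + 1)) * ((if j + 1 = i ∨ j = i then x (j + 1) - x j else 0) / 2) := by
  rw [integral_eq_sum_integral_of_eqOn_Ioo (g := fun j t =>
      slope u (x j) (x (j + 1)) * nodalPiece x biorthShape i j t)]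
  · exact sum_congr rfl fun j _ => by
      rw [integral_const_mul, integral_nodalPiece integral_biorthShape]
  · exact fun j hj => (lt_succ_of_strictMonoOn_Iic hx hj).le
  · exact fun j _ => continuous_const.mul
      (continuous_nodalPiece fun A B => by unfold biorthShape; fun_prop)
  · intro j hj t ht
    dsimp only
    rw [interpDeriv_eqOn hx u hj ht, biorthFn_eqOn_nodalPiece hx hi hj ht]

theorem integral_hatFn_mul_biorthFn (hx : StrictMonoOn x (Set.Iic n)) (hi : i ≤ n) :
    ∫ t in x 0..x n, hatFn x n i t * biorthFn x n i t =
      ∑ j ∈ range n, (if j + 1 = i ∨ j = i then x (j + 1) - x j else 0) / 2 := by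
  rw [integral_eq_sum_integral_of_eqOn_Ioo (g := fun j =>
      nodalPiece x (fun A B t => hatShape A B t * biorthShape A B t) i j)]
  · exact sum_congr rfl fun j _ => integral_nodalPiece integral_hatShape_mul_biorthShape
  · exact fun j hj => (lt_succ_of_strictMonoOn_Iic hx hj).le
  · exact fun j _ => continuous_nodalPiece fun A B => by unfold hatShape biorthShape; fun_prop
  · intro j hj t ht
    dsimp only
    rw [← nodalPiece_mul, hatFn_eqOn_nodalPiece hx hi hj ht, biorthFn_eqOn_nodalPiece hx hi hj ht]

theorem recGrad_eq_slope (hx : StrictMonoOn x (Set.Iic n)) (hi : i ≤ n) (u : ℝ → ℝ) :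
    recGrad x n u i = slope u (x (i - 1)) (x (min (i + 1) n)) := by
  have hstep : ∀ j ∈ range n,
      slope u (x j) (x (j + 1)) * ((if j + 1 = i ∨ j = i then x (j + 1) - x j else 0) / 2) =
        (if j + 1 = i ∨ j = i then (u ∘ x) (j + 1) - (u ∘ x) j else 0) / 2 := by
    intro j hj
    have hne : x (j + 1) - x j ≠ 0 :=
      sub_ne_zero.2 (lt_succ_of_strictMonoOn_Iic hx (mem_range.1 hj)).ne'
    split_ifs
    · rw [slope_def_field]; field_simp; rfl
    · simp
  rw [recGrad, integral_interpDeriv_mul_biorthFn hx hi, integral_hatFn_mul_biorthFn hx hi,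
    sum_congr rfl hstep, ← sum_div, ← sum_div, sum_range_ite_sub _ hi, sum_range_ite_sub _ hi,
    div_div_div_cancel_right₀ two_ne_zero, slope_def_field]
  rfl

end grid

/-- midpoint error for cubics: for `u(x) = a x³ + b x² + c x + d`
(so `u'(t) = 3 a t² + 2 b t + c`), with `x̃_i = (x_{i-1} + x_{i+1})/2` for interior `i`,
`x̃_0 = (x_0 + x_1)/2`, `x̃_n = (x_{n-1} + x_n)/2`:
`|g_i - u'(x̃_i)| = (|a|/4)(x_{i+1} - x_{i-1})²` for `1 ≤ i ≤ n-1`,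
`|g_0 - u'(x̃_0)| = (|a|/4)(x_1 - x_0)²`, and `|g_n - u'(x̃_n)| = (|a|/4)(x_n - x_{n-1})²`. -/
theorem recGrad_cubic_midpoint_error (n : ℕ) (x : ℕ → ℝ) (hn : 2 ≤ n)
    (hx : ∀ i < n, x i < x (i+1)) (a b c d : ℝ) :
    (∀ i : ℕ, 1 ≤ i → i < n →
      |recGrad x n (fun t => a * t^3 + b * t^2 + c * t + d) i
          - (3 * a * ((x (i-1) + x (i+1)) / 2)^2 + 2 * b * ((x (i-1) + x (i+1)) / 2) + c)|
        = (|a| / 4) * (x (i+1) - x (i-1))^2) ∧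
    |recGrad x n (fun t => a * t^3 + b * t^2 + c * t + d) 0
        - (3 * a * ((x 0 + x 1) / 2)^2 + 2 * b * ((x 0 + x 1) / 2) + c)|
      = (|a| / 4) * (x 1 - x 0)^2 ∧
    |recGrad x n (fun t => a * t^3 + b * t^2 + c * t + d) n
        - (3 * a * ((x (n-1) + x n) / 2)^2 + 2 * b * ((x (n-1) + x n) / 2) + c)|
      = (|a| / 4) * (x n - x (n-1))^2 := by
  have hmono : StrictMonoOn x (Set.Iic n) := strictMonoOn_Iic_of_lt_succ hx
  have key : ∀ i ≤ n, ∀ A C, A = x (i - 1) → C = x (min (i + 1) n) →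
      |recGrad x n (fun t => a * t^3 + b * t^2 + c * t + d) i
          - (3 * a * ((A + C) / 2)^2 + 2 * b * ((A + C) / 2) + c)| = (|a| / 4) * (C - A)^2 := by
    rintro i hi _ _ rfl rfl
    have hne : x (i - 1) ≠ x (min (i + 1) n) :=
      (hmono (Set.mem_Iic.2 (by omega)) (Set.mem_Iic.2 (min_le_right _ _)) (by omega)).ne
    rw [recGrad_eq_slope hmono hi, slope_cubic_sub_deriv_midpoint a b c d hne, abs_mul, abs_div,
      abs_sq, Nat.abs_ofNat]
  refine ⟨fun i _ hi => key i hi.le _ _ rfl ?_, key 0 (by omega) _ _ rfl ?_,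
    key n le_rfl _ _ ?_ ?_⟩
  · rw [min_eq_left (by omega)]
  · rw [min_eq_left (by omega)]
  · rfl
  · rw [min_eq_right (by omega)]
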